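/- arXiv:math/0403128 — 3 statements merged into one kernel-verified Lean document; each statement's English description precedes it below -/
import Mathlib

section
/- Let f ∈ L²(0,∞) and g be measurable with g ∈ L²(0,x) for every x ∈ [0,∞) but g ∉ L²(0,∞). Then lim_{x→∞} (∫₀ˣ f·conj(g)) / (∫₀ˣ |g|²)^{1/2} = 0. -/
/-!
Split `∫₀ˣ f·conj g` at a fixed `A`. The part over `(0, A]` is a constant, and by Cauchy–Schwarz
the part over `(A, x]` is at most `‖f‖_{L²(A,∞)} · (∫₀ˣ |g|²)^{1/2}`. Since `∫₀ˣ |g|² → ∞`, the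
quotient has `limsup ≤ ‖f‖_{L²(A,∞)}`, and this tail norm tends to `0` as `A → ∞`.
-/

open MeasureTheory Filter Set Topology ComplexConjugate

section CauchySchwarz

variable {α 𝕜 : Type*} [MeasurableSpace α] {μ : Measure α} [RCLike 𝕜] {f g : α → 𝕜}

lemma MeasureTheory.MemLp.integrable_mul_conj (hf : MemLp f 2 μ) (hg : MemLp g 2 μ) :
    Integrable (fun t => f t * conj (g t)) μ :=
  hf.integrable_mul hg.star

lemma norm_integral_mul_conj_le (hf : MemLp f 2 μ) (hg : MemLp g 2 μ) :
    ‖∫ t, f t * conj (g t) ∂μ‖ ≤ √(∫ t, ‖f t‖ ^ 2 ∂μ) * √(∫ t, ‖g t‖ ^ 2 ∂μ) := by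
  have hsq : ∀ u : α → 𝕜, ∫ t, ‖u t‖ ^ (2 : ℝ) ∂μ = ∫ t, ‖u t‖ ^ 2 ∂μ := fun u => by
    simp_rw [Real.rpow_two]
  calc ‖∫ t, f t * conj (g t) ∂μ‖
      ≤ ∫ t, ‖f t‖ * ‖g t‖ ∂μ := by
        simpa only [norm_mul, RCLike.norm_conj] using
          norm_integral_le_integral_norm (fun t => f t * conj (g t))
    _ ≤ (∫ t, ‖f t‖ ^ (2 : ℝ) ∂μ) ^ (1 / 2 : ℝ) * (∫ t, ‖g t‖ ^ (2 : ℝ) ∂μ) ^ (1 / 2 : ℝ) :=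
        integral_mul_norm_le_Lp_mul_Lq (E := 𝕜) .two_two (by simpa using hf) (by simpa using hg)
    _ = √(∫ t, ‖f t‖ ^ 2 ∂μ) * √(∫ t, ‖g t‖ ^ 2 ∂μ) := by
        rw [hsq, hsq, ← Real.sqrt_eq_rpow, ← Real.sqrt_eq_rpow]

end CauchySchwarz

section HalfLine

variable {μ : Measure ℝ}

lemma tendsto_setIntegral_Ioi_atTop_zero {E : Type*} [NormedAddCommGroup E] [NormedSpace ℝ E]
    {f : ℝ → E} {a : ℝ} (hf : IntegrableOn f (Ioi a) μ) :
    Tendsto (fun A => ∫ t in Ioi A, f t ∂μ) atTop (𝓝 0) := by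
  have h := tendsto_setIntegral_of_antitone (fun _ => measurableSet_Ioi)
    (fun _ _ hAB => Ioi_subset_Ioi hAB) ⟨a, hf⟩
  have hempty : ⋂ A : ℝ, Ioi A = ∅ := iInter_eq_empty_iff.2 fun t => ⟨t, lt_irrefl t⟩
  rwa [hempty, Measure.restrict_empty, integral_zero_measure] at h

lemma tendsto_setIntegral_Ioc_atTop_atTop {h : ℝ → ℝ} {a : ℝ} (h_nonneg : ∀ t, 0 ≤ h t)
    (h_loc : ∀ x, IntegrableOn h (Ioc a x) μ) (h_not : ¬ IntegrableOn h (Ioi a) μ) :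
    Tendsto (fun x => ∫ t in Ioc a x, h t ∂μ) atTop atTop := by
  have hmono : Monotone fun x => ∫ t in Ioc a x, h t ∂μ := fun x y hxy =>
    setIntegral_mono_set (h_loc y) (ae_of_all _ fun t => h_nonneg t)
      (Ioc_subset_Ioc_right hxy).eventuallyLE
  refine tendsto_atTop_atTop_of_monotone hmono fun I => ?_
  by_contra! hbounded
  refine h_not (integrableOn_Ioi_of_intervalIntegral_norm_bounded I a h_loc tendsto_id ?_)
  filter_upwards [eventually_ge_atTop a] with x hx
  simpa only [intervalIntegral.integral_of_le hx, Real.norm_of_nonneg (h_nonneg _)]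
    using (hbounded x).le

end HalfLine

lemma tendsto_norm_div_nhds_zero_of_le_add_mul {α β E : Type*} [SeminormedAddCommGroup E]
    {l : Filter α} {l' : Filter β} [l'.NeBot] {N : α → E} {v : α → ℝ} {c τ : β → ℝ}
    (hv : Tendsto v l atTop) (hτ : Tendsto τ l' (𝓝 0))
    (hN : ∀ᶠ A in l', ∀ᶠ x in l, ‖N x‖ ≤ c A + τ A * v x) :
    Tendsto (fun x => ‖N x‖ / v x) l (𝓝 0) := by
  refine Metric.tendsto_nhds.2 fun ε hε => ?_
  obtain ⟨A, hNA, hτA⟩ := (hN.and (hτ.eventually (gt_mem_nhds (half_pos hε)))).exists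
  have hcA : Tendsto (fun x => c A / v x) l (𝓝 0) := tendsto_const_nhds.div_atTop hv
  filter_upwards [hNA, hv.eventually_gt_atTop 0, hcA.eventually (gt_mem_nhds (half_pos hε))]
    with x hNx hvx hcx
  rw [Real.dist_0_eq_abs, abs_of_nonneg (by positivity)]
  calc ‖N x‖ / v x ≤ (c A + τ A * v x) / v x := by gcongr
    _ = c A / v x + τ A := by field_simp
    _ < ε := by linarith

lemma norm_setIntegral_Ioc_mul_conj_le {𝕜 : Type*} [RCLike 𝕜] {μ : Measure ℝ} {f g : ℝ → 𝕜}
    {a A x : ℝ} (haA : a ≤ A) (hAx : A ≤ x)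
    (hf : MemLp f 2 (μ.restrict (Ioi a))) (hg : MemLp g 2 (μ.restrict (Ioc a x))) :
    ‖∫ t in Ioc a x, f t * conj (g t) ∂μ‖ ≤
      ‖∫ t in Ioc a A, f t * conj (g t) ∂μ‖ +
        √(∫ t in Ioi A, ‖f t‖ ^ 2 ∂μ) * √(∫ t in Ioc a x, ‖g t‖ ^ 2 ∂μ) := by
  have hfA : MemLp f 2 (μ.restrict (Ioi A)) :=
    hf.mono_measure (Measure.restrict_mono_set μ (Ioi_subset_Ioi haA))
  have hfAx : MemLp f 2 (μ.restrict (Ioc A x)) :=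
    hfA.mono_measure (Measure.restrict_mono_set μ Ioc_subset_Ioi_self)
  have hgAx : MemLp g 2 (μ.restrict (Ioc A x)) :=
    hg.mono_measure (Measure.restrict_mono_set μ (Ioc_subset_Ioc_left haA))
  have hsplit : ∫ t in Ioc a x, f t * conj (g t) ∂μ =
      ∫ t in Ioc a A, f t * conj (g t) ∂μ + ∫ t in Ioc A x, f t * conj (g t) ∂μ := by
    have hfa : MemLp f 2 (μ.restrict (Ioc a A)) :=
      hf.mono_measure (Measure.restrict_mono_set μ Ioc_subset_Ioi_self)
    have hga : MemLp g 2 (μ.restrict (Ioc a A)) :=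
      hg.mono_measure (Measure.restrict_mono_set μ (Ioc_subset_Ioc_right hAx))
    rw [← Ioc_union_Ioc_eq_Ioc haA hAx, setIntegral_union (Ioc_disjoint_Ioc_of_le le_rfl)
      measurableSet_Ioc (hfa.integrable_mul_conj hga) (hfAx.integrable_mul_conj hgAx)]
  rw [hsplit]
  refine (norm_add_le _ _).trans (add_le_add_right ?_ _)
  refine (norm_integral_mul_conj_le hfAx hgAx).trans
    (mul_le_mul ?_ ?_ (by positivity) (by positivity))
  · exact Real.sqrt_le_sqrt <| setIntegral_mono_set hfA.norm.integrable_sq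
      (ae_of_all _ fun t => by positivity) Ioc_subset_Ioi_self.eventuallyLE
  · exact Real.sqrt_le_sqrt <| setIntegral_mono_set hg.norm.integrable_sq
      (ae_of_all _ fun t => by positivity) (Ioc_subset_Ioc_left haA).eventuallyLE

/-- The L² lemma: if `f ∈ L²(0,∞)` and `g` is square-integrable on every `(0,x)`
but not on `(0,∞)`, then `(∫₀ˣ f·conj g) / (∫₀ˣ |g|²)^{1/2} → 0` as `x → ∞`. -/
theorem L2_lemma (f g : ℝ → ℂ)
    (hfm : Measurable f) (hgm : Measurable g)
    (hf : IntegrableOn (fun t => ‖f t‖ ^ 2) (Set.Ioi 0))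
    (hgloc : ∀ x : ℝ, IntegrableOn (fun t => ‖g t‖ ^ 2) (Set.Ioc 0 x))
    (hg : ¬ IntegrableOn (fun t => ‖g t‖ ^ 2) (Set.Ioi 0)) :
    Tendsto (fun x : ℝ =>
        (∫ t in (0:ℝ)..x, f t * (starRingEnd ℂ) (g t)) /
          ((Real.sqrt (∫ t in (0:ℝ)..x, ‖g t‖ ^ 2) : ℝ) : ℂ))
      atTop (nhds 0) := by
  have hfL2 : MemLp f 2 (volume.restrict (Ioi 0)) :=
    (memLp_two_iff_integrable_sq_norm hfm.aestronglyMeasurable).2 hf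
  have hgL2 : ∀ x, MemLp g 2 (volume.restrict (Ioc 0 x)) := fun x =>
    (memLp_two_iff_integrable_sq_norm hgm.aestronglyMeasurable).2 (hgloc x)
  have hG := tendsto_setIntegral_Ioc_atTop_atTop (fun t => by positivity) hgloc hg
  have hT : Tendsto (fun A => √(∫ t in Ioi A, ‖f t‖ ^ 2)) atTop (𝓝 0) := by
    simpa using (tendsto_setIntegral_Ioi_atTop_zero hf).sqrt
  have hlim := tendsto_norm_div_nhds_zero_of_le_add_mul (Real.tendsto_sqrt_atTop.comp hG) hT <| by
    filter_upwards [eventually_ge_atTop 0] with A hA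
    filter_upwards [eventually_ge_atTop A] with x hx
    exact norm_setIntegral_Ioc_mul_conj_le hA hx hfL2 (hgL2 x)
  refine tendsto_zero_iff_norm_tendsto_zero.2 (hlim.congr' ?_)
  filter_upwards [eventually_ge_atTop 0] with x hx
  rw [intervalIntegral.integral_of_le hx, intervalIntegral.integral_of_le hx, norm_div,
    Complex.norm_real, Real.norm_of_nonneg (Real.sqrt_nonneg _)]
  rfl
end

section
/- Let φ₁,…,φ_n : [0,∞) → ℂ be functions, square-integrable on every bounded interval, such that no nontrivial linear combination of them lies in L²(0,∞). For each x > 0 let P₁(x) ≤ … ≤ Pₙ(x) be the eigenvalues of the Gram matrix Γ_x = [∫₀ˣ φ_s·conj(φ_t)]. Then lim_{x→∞} P₁(x) = ∞. -/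
/-!
For a unit vector `v`, the quadratic form `v* Γ_x v = ∫₀ˣ |∑ conj (v s) φ s|²` is continuous
in `v`, nondecreasing in `x`, and unbounded in `x` because `∑ conj (v s) φ s ∉ L²(0,∞)`.
By compactness of the unit sphere (a Dini-type argument) it exceeds any bound uniformly in `v`
for large `x`, and the smallest eigenvalue is its value at a unit eigenvector.
-/

open MeasureTheory Filter Matrix Set ComplexConjugate

theorem IsCompact.eventually_forall_lt_of_monotone {ι X : Type*} [Preorder ι]
    [IsDirected ι (· ≤ ·)] [Nonempty ι] [TopologicalSpace X] {K : Set X} (hK : IsCompact K)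
    {f : ι → X → ℝ} (hsc : ∀ i, LowerSemicontinuous (f i))
    (hmono : ∀ v, Monotone (f · v)) (hunb : ∀ v ∈ K, ∀ M, ∃ i, M < f i v) (M : ℝ) :
    ∀ᶠ i in atTop, ∀ v ∈ K, M < f i v := by
  obtain ⟨i₀, hi₀⟩ := hK.elim_directed_cover (fun i => f i ⁻¹' Ioi M)
    (fun i => (hsc i).isOpen_preimage M) (fun v hv => mem_iUnion.2 (hunb v hv M))
    (Monotone.directed_le fun i j hij v (hv : M < f i v) => hv.trans_le (hmono v hij))
  filter_upwards [eventually_ge_atTop i₀] with i hi v hv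
  exact (hi₀ hv : M < f i₀ v).trans_le (hmono v hi)

section Gram

variable {α ι : Type*} [MeasurableSpace α] {μ : Measure α} [Fintype ι] {φ : ι → α → ℂ}

theorem integrable_sq_norm_sum_mul (hφ : ∀ s, MemLp (φ s) 2 μ) (c : ι → ℂ) :
    Integrable (fun a => ‖∑ s, c s * φ s a‖ ^ 2) μ :=
  have hsum : MemLp (fun a => ∑ s, c s * φ s a) 2 μ :=
    memLp_finsetSum _ fun s _ => (hφ s).const_mul (c s)
  (memLp_two_iff_integrable_sq_norm hsum.aestronglyMeasurable).1 hsum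

theorem star_dotProduct_integral_mul_conj_mulVec (hφ : ∀ s, MemLp (φ s) 2 μ) (v : ι → ℂ) :
    star v ⬝ᵥ (of fun s t => ∫ a, φ s a * conj (φ t a) ∂μ) *ᵥ v
      = ((∫ a, ‖∑ s, conj (v s) * φ s a‖ ^ 2 ∂μ : ℝ) : ℂ) := by
  have hint : ∀ s t, Integrable (fun a => conj (v s) * φ s a * conj (conj (v t) * φ t a)) μ :=
    fun s t => ((hφ s).const_mul _).integrable_mul ((hφ t).const_mul _).star
  calc star v ⬝ᵥ (of fun s t => ∫ a, φ s a * conj (φ t a) ∂μ) *ᵥ v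
      = ∑ s, ∑ t, ∫ a, conj (v s) * φ s a * conj (conj (v t) * φ t a) ∂μ := by
        simp only [dotProduct, mulVec, of_apply, Finset.mul_sum, Pi.star_apply, RCLike.star_def,
          ← integral_const_mul, ← integral_mul_const, map_mul, Complex.conj_conj]
        congr! 3 with s _ t _
        ext a
        ring
    _ = ∫ a, (∑ s, conj (v s) * φ s a) * conj (∑ t, conj (v t) * φ t a) ∂μ := by
        simp only [map_sum, Finset.sum_mul_sum]
        rw [integral_finsetSum _ fun s _ => integrable_finsetSum _ fun t _ => hint s t]
        simp only [integral_finsetSum _ fun t _ => hint _ t]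
    _ = _ := by
        simp only [RCLike.mul_conj]
        norm_cast

end Gram

section Ioc

variable {f : ℝ → ℝ} {a : ℝ}

theorem monotone_setIntegral_Ioc (hf₀ : ∀ t, 0 ≤ f t)
    (hloc : ∀ x, IntegrableOn f (Ioc a x)) : Monotone fun x => ∫ t in Ioc a x, f t :=
  fun _ y hxy => setIntegral_mono_set (hloc y) (ae_of_all _ hf₀)
    (Ioc_subset_Ioc_right hxy).eventuallyLE

theorem exists_lt_setIntegral_Ioc_of_not_integrableOn_Ioi (hf₀ : ∀ t, 0 ≤ f t)
    (hloc : ∀ x, IntegrableOn f (Ioc a x)) (hf : ¬ IntegrableOn f (Ioi a)) (M : ℝ) :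
    ∃ x, M < ∫ t in Ioc a x, f t := by
  by_contra! hbdd
  refine hf (integrableOn_Ioi_of_intervalIntegral_norm_bounded M a hloc tendsto_id ?_)
  filter_upwards [eventually_ge_atTop a] with x hx
  simpa [intervalIntegral.integral_of_le hx, Real.norm_of_nonneg (hf₀ _)] using hbdd x

end Ioc

/-- If no nontrivial linear combination of the locally square-integrable functions
`φ₁, …, φₙ` lies in `L²(0,∞)`, then the smallest eigenvalue of the Gram matrix
`Γ_x = [∫₀ˣ φ_s · conj φ_t]` tends to infinity as `x → ∞`. -/
theorem smallest_gram_eigenvalue_tendsto_atTop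
    (n : ℕ) (hn : 0 < n) (φ : Fin n → ℝ → ℂ)
    (hmeas : ∀ s, Measurable (φ s))
    (hloc : ∀ s, ∀ x : ℝ, IntegrableOn (fun t => ‖φ s t‖ ^ 2) (Set.Ioc 0 x))
    (hind : ∀ c : Fin n → ℂ, c ≠ 0 →
      ¬ IntegrableOn (fun t => ‖∑ s, c s * φ s t‖ ^ 2) (Set.Ioi 0))
    (Γ : ℝ → Matrix (Fin n) (Fin n) ℂ)
    (hΓ : ∀ x, Γ x = Matrix.of fun s t => ∫ u in (0:ℝ)..x, φ s u * (starRingEnd ℂ) (φ t u))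
    (hherm : ∀ x, (Γ x).IsHermitian) :
    Tendsto (fun x : ℝ => ⨅ i : Fin n, (hherm x).eigenvalues i) atTop atTop := by
  have : Nonempty (Fin n) := ⟨⟨0, hn⟩⟩
  have hL2 : ∀ x s, MemLp (φ s) 2 (volume.restrict (Ioc 0 x)) := fun x s =>
    (memLp_two_iff_integrable_sq_norm (hmeas s).aestronglyMeasurable).2 (hloc s x)
  set Q : ℝ → EuclideanSpace ℂ (Fin n) → ℝ :=
    fun x v => ∫ t in Ioc 0 x, ‖∑ s, conj (v s) * φ s t‖ ^ 2
  have hQ : ∀ x v, Q x v =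
      RCLike.re (star ⇑v ⬝ᵥ (of fun s t => ∫ u in Ioc 0 x, φ s u * conj (φ t u)) *ᵥ ⇑v) :=
    fun x v => by rw [star_dotProduct_integral_mul_conj_mulVec (hL2 x)]; rfl
  have hcont : ∀ x, Continuous (Q x) := fun x => by rw [funext (hQ x)]; fun_prop
  have hint : ∀ x (v : Fin n → ℂ),
      IntegrableOn (fun t => ‖∑ s, conj (v s) * φ s t‖ ^ 2) (Ioc 0 x) :=
    fun x v => integrable_sq_norm_sum_mul (hL2 x) _
  have hunb : ∀ v ∈ Metric.sphere (0 : EuclideanSpace ℂ (Fin n)) 1, ∀ M, ∃ x, M < Q x v :=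
    fun v hv => exists_lt_setIntegral_Ioc_of_not_integrableOn_Ioi (fun t => by positivity)
      (hint · v) (hind (star ⇑v) (by simpa using ne_zero_of_mem_unit_sphere ⟨v, hv⟩))
  have heig : ∀ x, 0 ≤ x → ∀ i, ∃ v ∈ Metric.sphere (0 : EuclideanSpace ℂ (Fin n)) 1,
      (hherm x).eigenvalues i = Q x v := by
    refine fun x hx i => ⟨_, mem_sphere_zero_iff_norm.2
      ((hherm x).eigenvectorBasis.orthonormal.1 i), ?_⟩
    rw [(hherm x).eigenvalues_eq, hQ]
    congr 4
    rw [hΓ]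
    ext s t
    exact intervalIntegral.integral_of_le hx
  refine tendsto_atTop.2 fun M => ?_
  filter_upwards [(isCompact_sphere 0 1).eventually_forall_lt_of_monotone
      (fun x => (hcont x).lowerSemicontinuous)
      (fun v => monotone_setIntegral_Ioc (fun t => by positivity) (hint · v)) hunb M,
    eventually_ge_atTop 0] with x hx hx₀
  refine le_ciInf fun i => ?_
  obtain ⟨v, hv, hi⟩ := heig x hx₀ i
  exact hi ▸ (hx v hv).le
end

section
/- Let g ∈ Δ (so M[g] ∈ L²(0,∞)) and let π solve M[π] = conj(λ)·π with π ∈ L²(0,x) for every x but π ∉ L²(0,∞). Set P(x) = ∫₀ˣ |π|². Then lim_{x→∞} [g π](x)/P(x)^{1/2} = 0. -/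
/-!
Split `∫₀ˣ conj(π)·(M[g] − conj(λ)g)` at a point `X` beyond which the `L²` mass of
`M[g] − conj(λ)g` is below `ε²`. By Cauchy–Schwarz the piece over `(X, x)` is at most
`ε · P(x)^{1/2}`, while `F 0` and the piece over `(0, X)` are constants, negligible against
`P(x)^{1/2} → ∞` (which holds because `π ∉ L²(0,∞)`).
-/

open MeasureTheory Filter Set Asymptotics

lemma memLp_two_norm_of_integrable_norm_sq {α E : Type*} [MeasurableSpace α] {μ : Measure α}
    [NormedAddCommGroup E] {f : α → E} (hf : Integrable (fun a => ‖f a‖ ^ 2) μ) :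
    MemLp (fun a => ‖f a‖) 2 μ := by
  have hmeas : AEStronglyMeasurable (fun a => ‖f a‖) μ := by
    simpa only [Function.comp_def, Real.sqrt_sq (norm_nonneg _)] using
      Real.continuous_sqrt.comp_aestronglyMeasurable hf.aestronglyMeasurable
  exact (memLp_two_iff_integrable_sq hmeas).2 hf

lemma integral_norm_mul_norm_le_sqrt_mul_sqrt {α E F : Type*} [MeasurableSpace α]
    {μ : Measure α} [NormedAddCommGroup E] [NormedAddCommGroup F] {f : α → E} {g : α → F}
    (hf : MemLp f 2 μ) (hg : MemLp g 2 μ) :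
    ∫ a, ‖f a‖ * ‖g a‖ ∂μ ≤ √(∫ a, ‖f a‖ ^ 2 ∂μ) * √(∫ a, ‖g a‖ ^ 2 ∂μ) := by
  have h := integral_mul_norm_le_Lp_mul_Lq Real.HolderConjugate.two_two
    (by simpa using hf.norm) (by simpa using hg.norm)
  simpa only [norm_norm, Real.rpow_two, Real.sqrt_eq_rpow] using h

lemma tendsto_intervalIntegral_atTop_of_not_integrableOn_Ioi {f : ℝ → ℝ} {a : ℝ}
    (hf : ∀ t, 0 ≤ f t) (hloc : ∀ x, IntegrableOn f (Ioc a x))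
    (hnot : ¬ IntegrableOn f (Ioi a)) :
    Tendsto (fun x => ∫ t in a..x, f t) atTop atTop := by
  refine tendsto_atTop.2 fun b => not_not.1 fun hfreq => hnot ?_
  refine integrableOn_Ioi_of_intervalIntegral_norm_bounded b a hloc tendsto_id ?_
  filter_upwards [eventually_ge_atTop a] with y hay
  obtain ⟨x, hxb, hyx⟩ := ((not_eventually.1 hfreq).and_eventually (eventually_ge_atTop y)).exists
  calc ∫ t in a..y, ‖f t‖ = ∫ t in a..y, f t := by simp only [Real.norm_of_nonneg (hf _)]
    _ ≤ ∫ t in a..x, f t := intervalIntegral.integral_mono_interval le_rfl hay hyx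
        (ae_of_all _ hf)
        ((intervalIntegrable_iff_integrableOn_Ioc_of_le (hay.trans hyx)).2 (hloc x))
    _ ≤ b := (not_le.1 hxb).le

section SqrtIntervalIntegral

variable {E F G : Type*} [NormedAddCommGroup E] [NormedAddCommGroup F] [NormedAddCommGroup G]
  [NormedSpace ℝ G]
  {p : ℝ → E} {a : ℝ}

lemma const_isLittleO_sqrt_intervalIntegral_norm_sq
    (hp : ∀ x, IntegrableOn (fun t => ‖p t‖ ^ 2) (Ioc a x))
    (hp_not : ¬ IntegrableOn (fun t => ‖p t‖ ^ 2) (Ioi a)) (c : F) :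
    (fun _ => c) =o[atTop] (fun x => √(∫ t in a..x, ‖p t‖ ^ 2)) := by
  refine isLittleO_const_left.2 (Or.inr ?_)
  simpa only [Function.comp_def, Real.norm_of_nonneg (Real.sqrt_nonneg _)] using
    Real.tendsto_sqrt_atTop.comp
      (tendsto_intervalIntegral_atTop_of_not_integrableOn_Ioi (fun _ => sq_nonneg _) hp hp_not)

lemma norm_intervalIntegral_le_sqrt_mul_sqrt_integral_Ioi {u : ℝ → F} {h : ℝ → G} {X x : ℝ}
    (hp : ∀ x, IntegrableOn (fun t => ‖p t‖ ^ 2) (Ioc a x))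
    (hu : MemLp u 2 (volume.restrict (Ioi a)))
    (hbound : ∀ t, ‖h t‖ ≤ ‖p t‖ * ‖u t‖) (haX : a ≤ X) (hXx : X ≤ x) :
    ‖∫ t in X..x, h t‖ ≤ √(∫ t in a..x, ‖p t‖ ^ 2) * √(∫ t in Ioi X, ‖u t‖ ^ 2) := by
  have hsub : Ioc X x ⊆ Ioc a x := Ioc_subset_Ioc_left haX
  have hp' : MemLp (fun t => ‖p t‖) 2 (volume.restrict (Ioc X x)) :=
    memLp_two_norm_of_integrable_norm_sq ((hp x).mono_set hsub)
  have hu' : MemLp u 2 (volume.restrict (Ioc X x)) :=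
    hu.mono_measure (Measure.restrict_mono (Ioc_subset_Ioi_self.trans (Ioi_subset_Ioi haX)) le_rfl)
  have hu2 : IntegrableOn (fun t => ‖u t‖ ^ 2) (Ioi X) :=
    IntegrableOn.mono_set (hu.integrable_norm_pow two_ne_zero) (Ioi_subset_Ioi haX)
  rw [intervalIntegral.integral_of_le hXx, intervalIntegral.integral_of_le (haX.trans hXx)]
  calc ‖∫ t in Ioc X x, h t‖ ≤ ∫ t in Ioc X x, ‖p t‖ * ‖u t‖ :=
        norm_integral_le_of_norm_le (hp'.integrable_mul hu'.norm) (ae_of_all _ hbound)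
    _ ≤ √(∫ t in Ioc X x, ‖p t‖ ^ 2) * √(∫ t in Ioc X x, ‖u t‖ ^ 2) := by
        simpa only [norm_norm] using integral_norm_mul_norm_le_sqrt_mul_sqrt hp' hu'
    _ ≤ √(∫ t in Ioc a x, ‖p t‖ ^ 2) * √(∫ t in Ioi X, ‖u t‖ ^ 2) := by
        refine mul_le_mul (Real.sqrt_le_sqrt ?_) (Real.sqrt_le_sqrt ?_) (Real.sqrt_nonneg _)
          (Real.sqrt_nonneg _)
        · exact setIntegral_mono_set (hp x) (ae_of_all _ fun _ => sq_nonneg _) hsub.eventuallyLE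
        · exact setIntegral_mono_set hu2 (ae_of_all _ fun _ => sq_nonneg _)
            Ioc_subset_Ioi_self.eventuallyLE

lemma intervalIntegral_isLittleO_sqrt_of_integrableOn {u : ℝ → F} {h : ℝ → G}
    (hp : ∀ x, IntegrableOn (fun t => ‖p t‖ ^ 2) (Ioc a x))
    (hp_not : ¬ IntegrableOn (fun t => ‖p t‖ ^ 2) (Ioi a))
    (hu : MemLp u 2 (volume.restrict (Ioi a)))
    (hbound : ∀ t, ‖h t‖ ≤ ‖p t‖ * ‖u t‖) (hh : ∀ x, IntegrableOn h (Ioc a x)) :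
    (fun x => ∫ t in a..x, h t) =o[atTop] (fun x => √(∫ t in a..x, ‖p t‖ ^ 2)) := by
  refine isLittleO_iff.2 fun ε hε => ?_
  obtain ⟨X, hX, haX⟩ : ∃ X, ∫ t in Ioi X, ‖u t‖ ^ 2 ≤ (ε / 2) ^ 2 ∧ a ≤ X :=
    (((tendsto_integral_Ioi_zero tendsto_id).eventually (ge_mem_nhds (by positivity))).and
      (eventually_ge_atTop a)).exists
  filter_upwards [(const_isLittleO_sqrt_intervalIntegral_norm_sq hp hp_not
    (∫ t in a..X, h t)).bound (half_pos hε), eventually_ge_atTop X] with x hhead hXx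
  have htail := norm_intervalIntegral_le_sqrt_mul_sqrt_integral_Ioi hp hu hbound haX hXx
  have hsqrt : √(∫ t in Ioi X, ‖u t‖ ^ 2) ≤ ε / 2 :=
    (Real.sqrt_le_sqrt hX).trans_eq (Real.sqrt_sq (by positivity))
  rw [← intervalIntegral.integral_add_adjacent_intervals
    ((intervalIntegrable_iff_integrableOn_Ioc_of_le haX).2 (hh X))
    ((intervalIntegrable_iff_integrableOn_Ioc_of_le hXx).2
      ((hh x).mono_set (Ioc_subset_Ioc_left haX)))]
  rw [Real.norm_of_nonneg (Real.sqrt_nonneg _)] at hhead ⊢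
  calc ‖(∫ t in a..X, h t) + ∫ t in X..x, h t‖
      ≤ ‖∫ t in a..X, h t‖ + ‖∫ t in X..x, h t‖ := norm_add_le _ _
    _ ≤ ε / 2 * √(∫ t in a..x, ‖p t‖ ^ 2) + √(∫ t in a..x, ‖p t‖ ^ 2) * (ε / 2) := by
        gcongr
        exact htail.trans (by gcongr)
    _ = ε * √(∫ t in a..x, ‖p t‖ ^ 2) := by ring

/-- No measurability of `h` is needed: if `h` is not integrable on some `(a, x₀)`, its interval
integrals are the junk value `0` for all `x ≥ x₀`. -/
lemma intervalIntegral_isLittleO_sqrt {u : ℝ → F} {h : ℝ → G}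
    (hp : ∀ x, IntegrableOn (fun t => ‖p t‖ ^ 2) (Ioc a x))
    (hp_not : ¬ IntegrableOn (fun t => ‖p t‖ ^ 2) (Ioi a))
    (hu : MemLp u 2 (volume.restrict (Ioi a))) (hbound : ∀ t, ‖h t‖ ≤ ‖p t‖ * ‖u t‖) :
    (fun x => ∫ t in a..x, h t) =o[atTop] (fun x => √(∫ t in a..x, ‖p t‖ ^ 2)) := by
  by_cases hh : ∀ x, IntegrableOn h (Ioc a x)
  · exact intervalIntegral_isLittleO_sqrt_of_integrableOn hp hp_not hu hbound hh
  obtain ⟨x₀, hx₀⟩ := not_forall.1 hh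
  refine (isLittleO_zero _ _).congr' ?_ EventuallyEq.rfl
  filter_upwards [eventually_ge_atTop x₀, eventually_ge_atTop a] with x hx hax
  rw [intervalIntegral.integral_of_le hax,
    integral_undef fun hint => hx₀ (IntegrableOn.mono_set hint (Ioc_subset_Ioc_right hx))]

end SqrtIntervalIntegral

theorem concomitant_over_sqrt_tendsto_zero_general
    (M : (ℝ → ℂ) → (ℝ → ℂ)) (g π : ℝ → ℂ) (lam : ℂ) (F : ℝ → ℂ)
    (hgL2 : IntegrableOn (fun t => ‖g t‖ ^ 2) (Set.Ioi 0))
    (hMgL2 : IntegrableOn (fun t => ‖M g t‖ ^ 2) (Set.Ioi 0))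
    (hπloc : ∀ x : ℝ, IntegrableOn (fun t => ‖π t‖ ^ 2) (Set.Ioc 0 x))
    (hπnotL2 : ¬ IntegrableOn (fun t => ‖π t‖ ^ 2) (Set.Ioi 0))
    (hGreen : ∀ x : ℝ, F x = F 0 +
      ∫ t in (0:ℝ)..x, (starRingEnd ℂ) (π t) * (M g t - (starRingEnd ℂ) lam * g t)) :
    Tendsto (fun x : ℝ =>
        F x / ((Real.sqrt (∫ t in (0:ℝ)..x, ‖π t‖ ^ 2) : ℝ) : ℂ))
      atTop (nhds 0) := by
  set u : ℝ → ℝ := fun t => ‖M g t‖ + ‖lam‖ * ‖g t‖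
  have hu : MemLp u 2 (volume.restrict (Ioi 0)) :=
    (memLp_two_norm_of_integrable_norm_sq hMgL2).add
      ((memLp_two_norm_of_integrable_norm_sq hgL2).const_mul ‖lam‖)
  have hbound (t : ℝ) :
      ‖(starRingEnd ℂ) (π t) * (M g t - (starRingEnd ℂ) lam * g t)‖ ≤ ‖π t‖ * ‖u t‖ := by
    rw [norm_mul, Complex.norm_conj, Real.norm_of_nonneg (by positivity)]
    gcongr
    exact (norm_sub_le _ _).trans_eq (by rw [norm_mul, Complex.norm_conj])
  have hF : F =o[atTop] (fun x => √(∫ t in (0:ℝ)..x, ‖π t‖ ^ 2)) :=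
    ((const_isLittleO_sqrt_intervalIntegral_norm_sq hπloc hπnotL2 (F 0)).add
      (intervalIntegral_isLittleO_sqrt hπloc hπnotL2 hu hbound)).congr_left
      fun x => (hGreen x).symm
  exact (Complex.isLittleO_ofReal_right.2 hF).tendsto_div_nhds_zero

/-- Let `g ∈ Δ` (so `g, M[g] ∈ L²(0,∞)`) and let `π` solve `M[π] = conj(λ)·π`, with `π`
square-integrable on each `(0,x)` but not on `(0,∞)`, and `P x = ∫₀ˣ |π|²`. If the
concomitant `F x = [g π](x)` satisfies
`F x = F 0 + ∫₀ˣ conj(π)·(M[g] − conj(λ) g)`, then `F x / √(P x) → 0` as `x → ∞`. -/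
theorem concomitant_over_sqrt_tendsto_zero
    (M : (ℝ → ℂ) → (ℝ → ℂ)) (g π : ℝ → ℂ) (lam : ℂ) (F : ℝ → ℂ)
    (hgmeas : Measurable g) (hπmeas : Measurable π)
    (hgL2 : IntegrableOn (fun t => ‖g t‖ ^ 2) (Set.Ioi 0))
    (hMgL2 : IntegrableOn (fun t => ‖M g t‖ ^ 2) (Set.Ioi 0))
    (hπeq : M π = fun t => (starRingEnd ℂ) lam * π t)
    (hπloc : ∀ x : ℝ, IntegrableOn (fun t => ‖π t‖ ^ 2) (Set.Ioc 0 x))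
    (hπnotL2 : ¬ IntegrableOn (fun t => ‖π t‖ ^ 2) (Set.Ioi 0))
    (hGreen : ∀ x : ℝ, F x = F 0 +
      ∫ t in (0:ℝ)..x, (starRingEnd ℂ) (π t) * (M g t - (starRingEnd ℂ) lam * g t)) :
    Tendsto (fun x : ℝ =>
        F x / ((Real.sqrt (∫ t in (0:ℝ)..x, ‖π t‖ ^ 2) : ℝ) : ℂ))
      atTop (nhds 0) :=
  concomitant_over_sqrt_tendsto_zero_general M g π lam F hgL2 hMgL2 hπloc hπnotL2 hGreen
end
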